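/- Let 0<p≤q≤1. There is a constant C such that for every stopping time ν and every f∈L_2(Ω) with f supported in B_ν and 𝔼_n f = 0 almost everywhere on {ν≥n} for every n, the martingale (𝔼_n f)_n belongs to H^s_{p,q} and ‖f‖_{H^s_{p,q}} ≤ C ℙ(B_ν)^{1/p−1/2} (∫_{B_ν}|f|^2 dℙ)^{1/2}. Consequently, every continuous linear functional κ on H^s_{p,q} restricts to a continuous linear functional on this subspace L_2^ν(B_ν) of L_2, with norm at most C ℙ(B_ν)^{1/p−1/2}‖κ‖. -/

import Mathlib

open MeasureTheory Filter
open scoped ENNReal ENat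

noncomputable section

variable {Ω : Type*} {m0 : MeasurableSpace Ω}

/-- The Wiener amalgam quasi-norm `‖g‖_{p,q}` of an `ℝ≥0∞`-valued function `g`, with respect to
the partition `(Os j)_{j ∈ ℤ}` of `Ω`: for finite `q` it is
`(∑ j (∫_{Os j} g^p dμ)^{q/p})^{1/q}`, and for `q = ∞` it is `sup_j (∫_{Os j} g^p dμ)^{1/p}`. -/
def amalgamNorm (μ : Measure Ω) (Os : ℤ → Set Ω) (p : ℝ) (q : ℝ≥0∞) (g : Ω → ℝ≥0∞) : ℝ≥0∞ :=
  if q = ∞ then ⨆ j : ℤ, (∫⁻ ω in Os j, g ω ^ p ∂μ) ^ (1 / p)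
  else (∑' j : ℤ, (∫⁻ ω in Os j, g ω ^ p ∂μ) ^ (q.toReal / p)) ^ (1 / q.toReal)

/-- The amalgam quasi-norm of a real-valued function. -/
def amalgamNormR (μ : Measure Ω) (Os : ℤ → Set Ω) (p : ℝ) (q : ℝ≥0∞) (f : Ω → ℝ) : ℝ≥0∞ :=
  amalgamNorm μ Os p q fun ω => ENNReal.ofReal |f ω|

/-- The `L_r` norm (`0 < r ≤ ∞`) of an `ℝ≥0∞`-valued function. -/
def lrNorm (μ : Measure Ω) (r : ℝ≥0∞) (g : Ω → ℝ≥0∞) : ℝ≥0∞ :=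
  if r = ∞ then essSup g μ else (∫⁻ ω, g ω ^ r.toReal ∂μ) ^ (1 / r.toReal)

/-- The conditional square function `s(f) = (∑_n 𝔼_{n-1}|d_n f|²)^{1/2}` of the
process `f = (f_n)` (differences `d_{n+1} f = f_{n+1} - f_n`). -/
def condSq (ℱ : Filtration ℕ m0) (μ : Measure Ω) (f : ℕ → Ω → ℝ) : Ω → ℝ≥0∞ :=
  fun ω => (∑' n : ℕ, ENNReal.ofReal ((μ[(fun x => (f (n + 1) x - f n x) ^ 2)|ℱ n]) ω)) ^ (2⁻¹ : ℝ)

/-- The truncated conditional square function `s_n(f) = (∑_{i=1}^n 𝔼_{i-1}|d_i f|²)^{1/2}`. -/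
def condSqFin (ℱ : Filtration ℕ m0) (μ : Measure Ω) (f : ℕ → Ω → ℝ) (n : ℕ) : Ω → ℝ≥0∞ :=
  fun ω =>
    (∑ i ∈ Finset.range n, ENNReal.ofReal ((μ[(fun x => (f (i + 1) x - f i x) ^ 2)|ℱ i]) ω)) ^
      (2⁻¹ : ℝ)

/-- The square function `S(f) = (∑_n |d_n f|²)^{1/2}`. -/
def sqFn (f : ℕ → Ω → ℝ) : Ω → ℝ≥0∞ :=
  fun ω => (∑' n : ℕ, ENNReal.ofReal ((f (n + 1) ω - f n ω) ^ 2)) ^ (2⁻¹ : ℝ)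

/-- The truncated square function `S_n(f) = (∑_{i=1}^n |d_i f|²)^{1/2}` (real-valued). -/
def sqFnFin (f : ℕ → Ω → ℝ) (n : ℕ) : Ω → ℝ :=
  fun ω => Real.sqrt (∑ i ∈ Finset.range n, (f (i + 1) ω - f i ω) ^ 2)

/-- The maximal function `f* = sup_n |f_n|`. -/
def maxFn (f : ℕ → Ω → ℝ) : Ω → ℝ≥0∞ := fun ω => ⨆ n : ℕ, ENNReal.ofReal |f n ω|

/-- A stopping time with values in `ℕ ∪ {∞}` for the filtration `ℱ`. -/
def IsStoppingTimeE (ℱ : Filtration ℕ m0) (ν : Ω → ℕ∞) : Prop :=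
  ∀ n : ℕ, MeasurableSet[ℱ n] {ω | ν ω ≤ (n : ℕ∞)}

/-- `B_ν = {ν ≠ ∞}`. -/
def Bset (ν : Ω → ℕ∞) : Set Ω := {ω | ν ω ≠ ⊤}

/-- The `H^s_{p,q}` quasi-norm `‖s(f)‖_{p,q}` of a process `f`. -/
def HsNorm (ℱ : Filtration ℕ m0) (μ : Measure Ω) (Os : ℤ → Set Ω) (p : ℝ) (q : ℝ≥0∞)
    (f : ℕ → Ω → ℝ) : ℝ≥0∞ :=
  amalgamNorm μ Os p q (condSq ℱ μ f)

/-- Membership in the class `Γ` of adapted, nondecreasing, nonnegative sequences. -/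
def MemGamma (ℱ : Filtration ℕ m0) (β : ℕ → Ω → ℝ) : Prop :=
  Adapted ℱ β ∧ (∀ ω, Monotone fun n => β n ω) ∧ ∀ (n : ℕ) (ω : Ω), 0 ≤ β n ω

/-- `β_∞ = lim_n β_n (= sup_n β_n)` for a nondecreasing nonnegative sequence `β`. -/
def betaInfty (β : ℕ → Ω → ℝ) : Ω → ℝ≥0∞ := fun ω => ⨆ n, ENNReal.ofReal (β n ω)

/-- The `𝒬_{p,q}` quasi-norm: the infimum of `‖β_∞‖_{p,q}` over all `β ∈ Γ`
with `S_{n}(f) ≤ β_{n-1}`. -/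
def QNorm (ℱ : Filtration ℕ m0) (μ : Measure Ω) (Os : ℤ → Set Ω) (p : ℝ) (q : ℝ≥0∞)
    (f : ℕ → Ω → ℝ) : ℝ≥0∞ :=
  ⨅ (β : ℕ → Ω → ℝ) (_ : MemGamma ℱ β ∧ ∀ n : ℕ, ∀ᵐ ω ∂μ, sqFnFin f (n + 1) ω ≤ β n ω),
    amalgamNorm μ Os p q (betaInfty β)

/-- The `𝒫_{p,q}` quasi-norm: the infimum of `‖β_∞‖_{p,q}` over all `β ∈ Γ`
with `|f_n| ≤ β_{n-1}`. -/
def PNorm (ℱ : Filtration ℕ m0) (μ : Measure Ω) (Os : ℤ → Set Ω) (p : ℝ) (q : ℝ≥0∞)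
    (f : ℕ → Ω → ℝ) : ℝ≥0∞ :=
  ⨅ (β : ℕ → Ω → ℝ) (_ : MemGamma ℱ β ∧ ∀ n : ℕ, ∀ᵐ ω ∂μ, |f (n + 1) ω| ≤ β n ω),
    amalgamNorm μ Os p q (betaInfty β)

/-- A `(p,r)^s`-atom `a` associated to the stopping time `ν`. -/
structure IsAtomS (ℱ : Filtration ℕ m0) (μ : Measure Ω) (p : ℝ) (r : ℝ≥0∞)
    (a : Ω → ℝ) (ν : Ω → ℕ∞) : Prop where
  stopping : IsStoppingTimeE ℱ ν
  integrable : Integrable a μ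
  vanish : ∀ n : ℕ, ∀ᵐ ω ∂μ, (n : ℕ∞) ≤ ν ω → (μ[a|ℱ n]) ω = 0
  size : lrNorm μ r (condSq ℱ μ fun n => μ[a|ℱ n]) ≤ μ (Bset ν) ^ (1 / r.toReal - 1 / p)

/-- A `(p,q,r)^s`-atom `a` associated to the stopping time `ν`. -/
structure IsAtomS' (ℱ : Filtration ℕ m0) (μ : Measure Ω) (Os : ℤ → Set Ω) (p : ℝ) (q r : ℝ≥0∞)
    (a : Ω → ℝ) (ν : Ω → ℕ∞) : Prop where
  stopping : IsStoppingTimeE ℱ ν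
  integrable : Integrable a μ
  vanish : ∀ n : ℕ, ∀ᵐ ω ∂μ, (n : ℕ∞) ≤ ν ω → (μ[a|ℱ n]) ω = 0
  size : lrNorm μ r (condSq ℱ μ fun n => μ[a|ℱ n]) ≤
    μ (Bset ν) ^ (1 / r.toReal) * (amalgamNorm μ Os p q ((Bset ν).indicator 1))⁻¹

/-- A `(p,∞)^S`-atom `a` associated to the stopping time `ν`. -/
structure IsAtomBigS (ℱ : Filtration ℕ m0) (μ : Measure Ω) (p : ℝ)
    (a : Ω → ℝ) (ν : Ω → ℕ∞) : Prop where
  stopping : IsStoppingTimeE ℱ ν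
  integrable : Integrable a μ
  vanish : ∀ n : ℕ, ∀ᵐ ω ∂μ, (n : ℕ∞) ≤ ν ω → (μ[a|ℱ n]) ω = 0
  size : essSup (sqFn fun n => μ[a|ℱ n]) μ ≤ μ (Bset ν) ^ (-(1 / p))

/-- A `(p,q,∞)^S`-atom `a` associated to the stopping time `ν`. -/
structure IsAtomBigS' (ℱ : Filtration ℕ m0) (μ : Measure Ω) (Os : ℤ → Set Ω) (p : ℝ) (q : ℝ≥0∞)
    (a : Ω → ℝ) (ν : Ω → ℕ∞) : Prop where
  stopping : IsStoppingTimeE ℱ ν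
  integrable : Integrable a μ
  vanish : ∀ n : ℕ, ∀ᵐ ω ∂μ, (n : ℕ∞) ≤ ν ω → (μ[a|ℱ n]) ω = 0
  size : essSup (sqFn fun n => μ[a|ℱ n]) μ ≤ (amalgamNorm μ Os p q ((Bset ν).indicator 1))⁻¹

/-- A `(p,∞)^*`-atom `a` associated to the stopping time `ν`. -/
structure IsAtomStar (ℱ : Filtration ℕ m0) (μ : Measure Ω) (p : ℝ)
    (a : Ω → ℝ) (ν : Ω → ℕ∞) : Prop where
  stopping : IsStoppingTimeE ℱ ν
  integrable : Integrable a μ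
  vanish : ∀ n : ℕ, ∀ᵐ ω ∂μ, (n : ℕ∞) ≤ ν ω → (μ[a|ℱ n]) ω = 0
  size : essSup (maxFn fun n => μ[a|ℱ n]) μ ≤ μ (Bset ν) ^ (-(1 / p))

/-- A `(p,q,∞)^*`-atom `a` associated to the stopping time `ν`. -/
structure IsAtomStar' (ℱ : Filtration ℕ m0) (μ : Measure Ω) (Os : ℤ → Set Ω) (p : ℝ) (q : ℝ≥0∞)
    (a : Ω → ℝ) (ν : Ω → ℕ∞) : Prop where
  stopping : IsStoppingTimeE ℱ ν
  integrable : Integrable a μ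
  vanish : ∀ n : ℕ, ∀ᵐ ω ∂μ, (n : ℕ∞) ≤ ν ω → (μ[a|ℱ n]) ω = 0
  size : essSup (maxFn fun n => μ[a|ℱ n]) μ ≤ (amalgamNorm μ Os p q ((Bset ν).indicator 1))⁻¹

/-- The stopped limit `f^ν`: equal to `𝔼_{ν(ω)} f (ω)` where `ν(ω) < ∞`, and to `f(ω)`
(the a.e. limit of the martingale `(𝔼_n f)`) where `ν(ω) = ∞`. -/
def fStopped (ℱ : Filtration ℕ m0) (μ : Measure Ω) (f : Ω → ℝ) (ν : Ω → ℕ∞) : Ω → ℝ :=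
  fun ω => if ν ω = ⊤ then f ω else (μ[f|ℱ (ν ω).toNat]) ω

/-- The Campanato norm `‖g‖_{ℒ_{2,φ}} = sup_ν φ(B_ν)⁻¹ (ℙ(B_ν)⁻¹ ∫_{B_ν} |g - g^ν|² dℙ)^{1/2}`,
where `φ(A) = ‖1_A‖_{p,q} / ℙ(A)` and the supremum runs over all stopping times `ν`
with `ℙ(B_ν) ≠ 0`. -/
def campanatoNorm (ℱ : Filtration ℕ m0) (μ : Measure Ω) (Os : ℤ → Set Ω) (p : ℝ) (q : ℝ≥0∞)
    (g : Ω → ℝ) : ℝ≥0∞ :=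
  ⨆ (ν : Ω → ℕ∞) (_ : IsStoppingTimeE ℱ ν ∧ μ (Bset ν) ≠ 0),
    (amalgamNorm μ Os p q ((Bset ν).indicator 1) / μ (Bset ν))⁻¹ *
      ((μ (Bset ν))⁻¹ *
        ∫⁻ ω in Bset ν, ENNReal.ofReal ((g ω - fStopped ℱ μ g ν ω) ^ 2) ∂μ) ^ (2⁻¹ : ℝ)

/-! The conditional square function of an `L²` martingale vanishes off `B_ν`, because on the
`ℱ n`-measurable set `{ν > n}` both `𝔼_n f` and `𝔼_{n+1} f` vanish. Orthogonality of martingale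
differences bounds `‖s(f)‖₂` by `‖f‖₂`. For `p ≤ q` the amalgam quasi-norm is dominated by the
`L_p` quasi-norm (`ℓ^{q/p} ⊆ ℓ¹`), and Hölder's inequality on `B_ν` compares the `L_p` and `L_2`
norms of `s(f)` at the cost of the factor `ℙ(B_ν)^{1/p - 1/2}`. -/

theorem ENNReal.tsum_rpow_le_rpow_tsum {ι : Type*} (a : ι → ℝ≥0∞) {r : ℝ} (hr : 1 ≤ r) :
    ∑' i, a i ^ r ≤ (∑' i, a i) ^ r := by
  have hsplit : ∀ x : ℝ≥0∞, x ^ r = x ^ (r - 1) * x := fun x => by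
    conv_lhs => rw [← sub_add_cancel r 1]
    rw [ENNReal.rpow_add_of_nonneg _ _ (by linarith) zero_le_one, ENNReal.rpow_one]
  calc ∑' i, a i ^ r
      ≤ ∑' i, (∑' j, a j) ^ (r - 1) * a i := by
        refine ENNReal.tsum_le_tsum fun i => ?_
        rw [hsplit]
        gcongr
        exact ENNReal.le_tsum i
    _ = (∑' i, a i) ^ r := by rw [ENNReal.tsum_mul_left, ← hsplit]

theorem lintegral_eq_setLIntegral_of_ae_eq_zero {μ : Measure Ω} {s : Set Ω} (hs : MeasurableSet s)
    {g : Ω → ℝ≥0∞} (hg : ∀ᵐ ω ∂μ, ω ∉ s → g ω = 0) :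
    ∫⁻ ω, g ω ∂μ = ∫⁻ ω in s, g ω ∂μ := by
  have hzero : ∫⁻ ω in sᶜ, g ω ∂μ = 0 := by
    rw [lintegral_congr_ae ((ae_restrict_iff' hs.compl).mpr hg), lintegral_zero]
  rw [← lintegral_add_compl g hs, hzero, add_zero]

section Amalgam

variable {μ : Measure Ω} {Os : ℤ → Set Ω}

theorem amalgamNorm_le_lintegral_rpow (hOmeas : ∀ j, MeasurableSet (Os j))
    (hOdisj : Pairwise fun i j => Disjoint (Os i) (Os j)) (hOcov : (⋃ j, Os j) = Set.univ)
    {p : ℝ} {q : ℝ≥0∞} (hp : 0 < p) (hq : q ≠ ∞) (hpq : p ≤ q.toReal) (g : Ω → ℝ≥0∞) :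
    amalgamNorm μ Os p q g ≤ (∫⁻ ω, g ω ^ p ∂μ) ^ (1 / p) := by
  have hq0 : 0 < q.toReal := hp.trans_le hpq
  have hsum : ∑' j, ∫⁻ ω in Os j, g ω ^ p ∂μ = ∫⁻ ω, g ω ^ p ∂μ := by
    rw [← lintegral_iUnion hOmeas hOdisj, hOcov, Measure.restrict_univ]
  rw [amalgamNorm, if_neg hq, ← hsum]
  calc (∑' j, (∫⁻ ω in Os j, g ω ^ p ∂μ) ^ (q.toReal / p)) ^ (1 / q.toReal)
      ≤ ((∑' j, ∫⁻ ω in Os j, g ω ^ p ∂μ) ^ (q.toReal / p)) ^ (1 / q.toReal) := by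
        gcongr
        exact ENNReal.tsum_rpow_le_rpow_tsum _ ((one_le_div hp).mpr hpq)
    _ = (∑' j, ∫⁻ ω in Os j, g ω ^ p ∂μ) ^ (1 / p) := by
        rw [← ENNReal.rpow_mul]
        congr 1
        field_simp

end Amalgam

section ConditionalExpectation

variable {α : Type*} {m m₀ : MeasurableSpace α} {μ : Measure α} [IsFiniteMeasure μ] {g : α → ℝ}

theorem integral_condExp_mul_self (hm : m ≤ m₀) (hg : MemLp g 2 μ) :
    ∫ x, (μ[g|m]) x * g x ∂μ = ∫ x, (μ[g|m]) x ^ 2 ∂μ := by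
  have hgm : MemLp (μ[g|m]) 2 μ := hg.condExp one_le_two
  have hpull : μ[μ[g|m] * g|m] =ᵐ[μ] μ[g|m] * μ[g|m] :=
    condExp_mul_of_stronglyMeasurable_left stronglyMeasurable_condExp (hgm.integrable_mul hg)
      (hg.integrable one_le_two)
  calc ∫ x, (μ[g|m]) x * g x ∂μ = ∫ x, (μ[μ[g|m] * g|m]) x ∂μ :=
        (integral_condExp (f := μ[g|m] * g) hm).symm
    _ = ∫ x, (μ[g|m]) x ^ 2 ∂μ := integral_congr_ae (hpull.trans (.of_forall fun x => (sq _).symm))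

theorem integral_sq_sub_condExp (hm : m ≤ m₀) (hg : MemLp g 2 μ) :
    ∫ x, (g x - (μ[g|m]) x) ^ 2 ∂μ = ∫ x, g x ^ 2 ∂μ - ∫ x, (μ[g|m]) x ^ 2 ∂μ := by
  have hgm : MemLp (μ[g|m]) 2 μ := hg.condExp one_le_two
  have hsum : Integrable (fun x => g x ^ 2 + (μ[g|m]) x ^ 2) μ :=
    hg.integrable_sq.add hgm.integrable_sq
  have hcross : Integrable (fun x => 2 * ((μ[g|m]) x * g x)) μ :=
    (hgm.integrable_mul hg).const_mul 2
  have hexpand : (fun x => (g x - (μ[g|m]) x) ^ 2) =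
      fun x => g x ^ 2 + (μ[g|m]) x ^ 2 - 2 * ((μ[g|m]) x * g x) := by
    funext x; ring
  rw [hexpand, integral_sub hsum hcross, integral_add hg.integrable_sq hgm.integrable_sq,
    integral_const_mul, integral_condExp_mul_self hm hg]
  ring

theorem integral_sq_condExp_le (hm : m ≤ m₀) (hg : MemLp g 2 μ) :
    ∫ x, (μ[g|m]) x ^ 2 ∂μ ≤ ∫ x, g x ^ 2 ∂μ := by
  have hnonneg : 0 ≤ ∫ x, (g x - (μ[g|m]) x) ^ 2 ∂μ := integral_nonneg fun x => sq_nonneg _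
  linarith [integral_sq_sub_condExp hm hg]

end ConditionalExpectation

theorem measurable_condSq (ℱ : Filtration ℕ m0) (μ : Measure Ω) (F : ℕ → Ω → ℝ) :
    Measurable (condSq ℱ μ F) :=
  (Measurable.tsum fun n =>
    (stronglyMeasurable_condExp.mono (ℱ.le n)).measurable.ennreal_ofReal).pow_const _

section Martingale

variable {μ : Measure Ω} [IsFiniteMeasure μ] (ℱ : Filtration ℕ m0) {f : Ω → ℝ}

theorem integral_sq_condExp_succ_sub (hf : MemLp f 2 μ) (n : ℕ) :
    ∫ ω, ((μ[f|ℱ (n + 1)]) ω - (μ[f|ℱ n]) ω) ^ 2 ∂μ =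
      ∫ ω, (μ[f|ℱ (n + 1)]) ω ^ 2 ∂μ - ∫ ω, (μ[f|ℱ n]) ω ^ 2 ∂μ := by
  have htower : μ[μ[f|ℱ (n + 1)]|ℱ n] =ᵐ[μ] μ[f|ℱ n] :=
    condExp_condExp_of_le (ℱ.mono n.le_succ) (ℱ.le (n + 1))
  calc ∫ ω, ((μ[f|ℱ (n + 1)]) ω - (μ[f|ℱ n]) ω) ^ 2 ∂μ
      = ∫ ω, ((μ[f|ℱ (n + 1)]) ω - (μ[μ[f|ℱ (n + 1)]|ℱ n]) ω) ^ 2 ∂μ :=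
        integral_congr_ae (htower.mono fun ω hω => by dsimp only; rw [hω])
    _ = ∫ ω, (μ[f|ℱ (n + 1)]) ω ^ 2 ∂μ - ∫ ω, (μ[μ[f|ℱ (n + 1)]|ℱ n]) ω ^ 2 ∂μ :=
        integral_sq_sub_condExp (ℱ.le n) (hf.condExp one_le_two)
    _ = ∫ ω, (μ[f|ℱ (n + 1)]) ω ^ 2 ∂μ - ∫ ω, (μ[f|ℱ n]) ω ^ 2 ∂μ := by
        congr 1
        exact integral_congr_ae (htower.mono fun ω hω => by dsimp only; rw [hω])

theorem sum_range_integral_sq_condExp_succ_sub_le (hf : MemLp f 2 μ) (N : ℕ) :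
    ∑ n ∈ Finset.range N, ∫ ω, ((μ[f|ℱ (n + 1)]) ω - (μ[f|ℱ n]) ω) ^ 2 ∂μ ≤
      ∫ ω, f ω ^ 2 ∂μ := by
  have hnonneg : 0 ≤ ∫ ω, (μ[f|ℱ 0]) ω ^ 2 ∂μ := integral_nonneg fun ω => sq_nonneg _
  rw [Finset.sum_congr rfl fun n _ => integral_sq_condExp_succ_sub ℱ hf n,
    Finset.sum_range_sub fun n => ∫ ω, (μ[f|ℱ n]) ω ^ 2 ∂μ]
  linarith [integral_sq_condExp_le (ℱ.le N) hf]

theorem lintegral_condSq_sq_le (hf : MemLp f 2 μ) :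
    ∫⁻ ω, condSq ℱ μ (fun n => μ[f|ℱ n]) ω ^ (2 : ℝ) ∂μ ≤ ∫⁻ ω, ENNReal.ofReal (f ω ^ 2) ∂μ := by
  have hsq : ∀ ω, condSq ℱ μ (fun n => μ[f|ℱ n]) ω ^ (2 : ℝ) =
      ∑' n, ENNReal.ofReal ((μ[(fun x => ((μ[f|ℱ (n + 1)]) x - (μ[f|ℱ n]) x) ^ 2)|ℱ n]) ω) :=
    fun ω => by rw [condSq, ← ENNReal.rpow_mul]; norm_num
  have hterm : ∀ n, ∫⁻ ω, ENNReal.ofReal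
      ((μ[(fun x => ((μ[f|ℱ (n + 1)]) x - (μ[f|ℱ n]) x) ^ 2)|ℱ n]) ω) ∂μ =
      ENNReal.ofReal (∫ ω, ((μ[f|ℱ (n + 1)]) ω - (μ[f|ℱ n]) ω) ^ 2 ∂μ) := fun n => by
    rw [← ofReal_integral_eq_lintegral_ofReal integrable_condExp
      (condExp_nonneg (.of_forall fun ω => sq_nonneg _)), integral_condExp (ℱ.le n)]
  simp_rw [hsq]
  rw [lintegral_tsum fun n =>
      (stronglyMeasurable_condExp.mono (ℱ.le n)).measurable.ennreal_ofReal.aemeasurable,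
    ← ofReal_integral_eq_lintegral_ofReal hf.integrable_sq (.of_forall fun ω => sq_nonneg _)]
  refine ENNReal.tsum_le_of_sum_range_le fun N => ?_
  simp_rw [hterm]
  rw [← ENNReal.ofReal_sum_of_nonneg fun n _ => integral_nonneg fun ω => sq_nonneg _]
  exact ENNReal.ofReal_le_ofReal (sum_range_integral_sq_condExp_succ_sub_le ℱ hf N)

end Martingale

section StoppingTime

variable {μ : Measure Ω} {ℱ : Filtration ℕ m0} {ν : Ω → ℕ∞}

theorem IsStoppingTimeE.measurableSet_Bset (hν : IsStoppingTimeE ℱ ν) :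
    MeasurableSet (Bset ν) := by
  have hB : Bset ν = ⋃ n : ℕ, {ω | ν ω ≤ n} := by
    ext ω
    simp only [Bset, Set.mem_ofPred_eq, Set.mem_iUnion, ne_eq, ENat.ne_top_iff_exists]
    exact ⟨fun ⟨n, hn⟩ => ⟨n, hn.ge⟩, fun ⟨n, hn⟩ => ⟨(ν ω).toNat,
      (ENat.natCast_toNat (ne_top_of_le_ne_top (ENat.natCast_ne_top n) hn))⟩⟩
  rw [hB]
  exact .iUnion fun n => ℱ.le n _ (hν n)

theorem IsStoppingTimeE.ae_condSq_eq_zero_of_notMem_Bset (hν : IsStoppingTimeE ℱ ν)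
    {F : ℕ → Ω → ℝ} (hF : ∀ n : ℕ, ∀ᵐ ω ∂μ, (n : ℕ∞) ≤ ν ω → F n ω = 0) :
    ∀ᵐ ω ∂μ, ω ∉ Bset ν → condSq ℱ μ F ω = 0 := by
  have hterm : ∀ n : ℕ, ∀ᵐ ω ∂μ, ν ω = ⊤ →
      (μ[(fun x => (F (n + 1) x - F n x) ^ 2)|ℱ n]) ω = 0 := fun n => by
    have hs : MeasurableSet[ℱ n] {ω | ν ω ≤ n}ᶜ := (hν n).compl
    have hzero : (fun x => (F (n + 1) x - F n x) ^ 2) =ᵐ[μ.restrict {ω | ν ω ≤ n}ᶜ] 0 := by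
      rw [EventuallyEq, ae_restrict_iff' (ℱ.le n _ hs)]
      filter_upwards [hF n, hF (n + 1)] with ω h0 h1 hlt
      have hlt : (n : ℕ∞) < ν ω := not_le.mp hlt
      rw [h0 hlt.le, h1 (by push_cast; exact Order.add_one_le_of_lt hlt)]
      simp
    have h := condExp_ae_eq_restrict_zero hs hzero
    rw [EventuallyEq, ae_restrict_iff' (ℱ.le n _ hs)] at h
    filter_upwards [h] with ω hω htop
    exact hω (by simp [htop])
  filter_upwards [ae_all_iff.mpr hterm] with ω hω hB
  have htop : ν ω = ⊤ := by simpa [Bset] using hB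
  simp [condSq, hω _ htop]

end StoppingTime

theorem hsNorm_le_measure_Bset_rpow_mul {μ : Measure Ω} [IsFiniteMeasure μ]
    (ℱ : Filtration ℕ m0) {Os : ℤ → Set Ω} (hOmeas : ∀ j, MeasurableSet (Os j))
    (hOdisj : Pairwise fun i j => Disjoint (Os i) (Os j)) (hOcov : (⋃ j, Os j) = Set.univ)
    {p : ℝ} {q : ℝ≥0∞} (hp : 0 < p) (hp2 : p ≤ 2) (hq : q ≠ ∞) (hpq : p ≤ q.toReal)
    {ν : Ω → ℕ∞} (hν : IsStoppingTimeE ℱ ν) {f : Ω → ℝ} (hf : MemLp f 2 μ)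
    (hsupp : ∀ᵐ ω ∂μ, ν ω = ⊤ → f ω = 0)
    (hvan : ∀ n : ℕ, ∀ᵐ ω ∂μ, (n : ℕ∞) ≤ ν ω → (μ[f|ℱ n]) ω = 0) :
    HsNorm ℱ μ Os p q (fun n => μ[f|ℱ n]) ≤
      μ (Bset ν) ^ (1 / p - 1 / 2) *
        (∫⁻ ω in Bset ν, ENNReal.ofReal (f ω ^ 2) ∂μ) ^ (2⁻¹ : ℝ) := by
  set s := condSq ℱ μ fun n => μ[f|ℱ n]
  have hB := hν.measurableSet_Bset
  have hs_zero : ∀ᵐ ω ∂μ, ω ∉ Bset ν → s ω = 0 := hν.ae_condSq_eq_zero_of_notMem_Bset hvan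
  have hf_zero : ∀ᵐ ω ∂μ, ω ∉ Bset ν → ENNReal.ofReal (f ω ^ 2) = 0 := by
    filter_upwards [hsupp] with ω hω hωB
    simp [hω (by simpa [Bset] using hωB)]
  have hHolder : (∫⁻ ω in Bset ν, s ω ^ p ∂μ) ^ (1 / p) ≤
      (∫⁻ ω in Bset ν, s ω ^ (2 : ℝ) ∂μ) ^ (1 / 2 : ℝ) * μ (Bset ν) ^ (1 / p - 1 / 2) := by
    have h := eLpNorm'_le_eLpNorm'_mul_rpow_measure_univ (μ := μ.restrict (Bset ν)) (f := s) hp hp2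
      (measurable_condSq ℱ μ _).aestronglyMeasurable
    simpa only [eLpNorm'_eq_lintegral_enorm, enorm_eq_self, Measure.restrict_apply_univ] using h
  have henergy : ∫⁻ ω in Bset ν, s ω ^ (2 : ℝ) ∂μ ≤ ∫⁻ ω in Bset ν, ENNReal.ofReal (f ω ^ 2) ∂μ :=
    calc ∫⁻ ω in Bset ν, s ω ^ (2 : ℝ) ∂μ ≤ ∫⁻ ω, s ω ^ (2 : ℝ) ∂μ := setLIntegral_le_lintegral _ _
      _ ≤ ∫⁻ ω, ENNReal.ofReal (f ω ^ 2) ∂μ := lintegral_condSq_sq_le ℱ hf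
      _ = ∫⁻ ω in Bset ν, ENNReal.ofReal (f ω ^ 2) ∂μ :=
        lintegral_eq_setLIntegral_of_ae_eq_zero hB hf_zero
  calc HsNorm ℱ μ Os p q (fun n => μ[f|ℱ n])
      ≤ (∫⁻ ω, s ω ^ p ∂μ) ^ (1 / p) :=
        amalgamNorm_le_lintegral_rpow hOmeas hOdisj hOcov hp hq hpq s
    _ = (∫⁻ ω in Bset ν, s ω ^ p ∂μ) ^ (1 / p) := by
        rw [lintegral_eq_setLIntegral_of_ae_eq_zero hB]
        filter_upwards [hs_zero] with ω hω hωB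
        simp [hω hωB, hp]
    _ ≤ (∫⁻ ω in Bset ν, s ω ^ (2 : ℝ) ∂μ) ^ (1 / 2 : ℝ) * μ (Bset ν) ^ (1 / p - 1 / 2) := hHolder
    _ ≤ (∫⁻ ω in Bset ν, ENNReal.ofReal (f ω ^ 2) ∂μ) ^ (1 / 2 : ℝ) *
          μ (Bset ν) ^ (1 / p - 1 / 2) := by
        gcongr ?_ ^ _ * _
    _ = _ := by rw [mul_comm, one_div 2]

theorem stmt17_general
    (μ : Measure Ω) [IsProbabilityMeasure μ] (ℱ : Filtration ℕ m0)
    (Os : ℤ → Set Ω) (hOmeas : ∀ j, MeasurableSet (Os j))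
    (hOdisj : Pairwise fun i j => Disjoint (Os i) (Os j)) (hOcov : (⋃ j, Os j) = Set.univ)
    (p q : ℝ) (hp : 0 < p) (hpq : p ≤ q) (hq1 : q ≤ 1) :
    ∃ C : ℝ, 0 < C ∧
      (∀ ν : Ω → ℕ∞, IsStoppingTimeE ℱ ν →
        ∀ f : Ω → ℝ, MemLp f 2 μ → (∀ᵐ ω ∂μ, ν ω = ⊤ → f ω = 0) →
          (∀ n : ℕ, ∀ᵐ ω ∂μ, (n : ℕ∞) ≤ ν ω → (μ[f|ℱ n]) ω = 0) →
          HsNorm ℱ μ Os p (ENNReal.ofReal q) (fun n => μ[f|ℱ n]) < ∞ ∧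
          HsNorm ℱ μ Os p (ENNReal.ofReal q) (fun n => μ[f|ℱ n]) ≤
            ENNReal.ofReal C * μ (Bset ν) ^ (1 / p - 1 / 2) *
              (∫⁻ ω in Bset ν, ENNReal.ofReal (f ω ^ 2) ∂μ) ^ (2⁻¹ : ℝ)) ∧
      ∀ κ : (Ω → ℝ) → ℝ, ∀ K : ℝ, 0 ≤ K →
        (∀ f : Ω → ℝ, MemLp f 2 μ → μ[f|ℱ 0] =ᵐ[μ] 0 →
          ENNReal.ofReal |κ f| ≤
            ENNReal.ofReal K *
              HsNorm ℱ μ Os p (ENNReal.ofReal q) fun n => μ[f|ℱ n]) →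
        ∀ ν : Ω → ℕ∞, IsStoppingTimeE ℱ ν →
        ∀ f : Ω → ℝ, MemLp f 2 μ → (∀ᵐ ω ∂μ, ν ω = ⊤ → f ω = 0) →
          (∀ n : ℕ, ∀ᵐ ω ∂μ, (n : ℕ∞) ≤ ν ω → (μ[f|ℱ n]) ω = 0) →
          ENNReal.ofReal |κ f| ≤
            ENNReal.ofReal (C * K) * μ (Bset ν) ^ (1 / p - 1 / 2) *
              (∫⁻ ω in Bset ν, ENNReal.ofReal (f ω ^ 2) ∂μ) ^ (2⁻¹ : ℝ) := by
  have hq0 : 0 < q := hp.trans_le hpq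
  have hbound := fun ν (hν : IsStoppingTimeE ℱ ν) f (hf : MemLp f 2 μ) hsupp hvan =>
    hsNorm_le_measure_Bset_rpow_mul (μ := μ) (q := ENNReal.ofReal q) ℱ hOmeas hOdisj hOcov hp
      (by linarith) ENNReal.ofReal_ne_top (by rwa [ENNReal.toReal_ofReal hq0.le]) hν hf hsupp hvan
  refine ⟨1, one_pos, fun ν hν f hf hsupp hvan => ⟨?_, by simpa using hbound ν hν f hf hsupp hvan⟩,
    fun κ K _ hκ ν hν f hf hsupp hvan => ?_⟩
  · refine (hbound ν hν f hf hsupp hvan).trans_lt (ENNReal.mul_lt_top ?_ ?_)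
    · have h1p : 1 ≤ 1 / p := by rw [le_div_iff₀ hp]; linarith
      exact (ENNReal.rpow_le_one prob_le_one (by linarith)).trans_lt ENNReal.one_lt_top
    · exact ENNReal.rpow_lt_top_of_nonneg (by norm_num)
        ((setLIntegral_le_lintegral _ _).trans_lt hf.integrable_sq.lintegral_lt_top).ne
  · have h0 : μ[f|ℱ 0] =ᵐ[μ] 0 := (hvan 0).mono fun ω hω => hω (by simp)
    calc ENNReal.ofReal |κ f|
        ≤ ENNReal.ofReal K * HsNorm ℱ μ Os p (ENNReal.ofReal q) fun n => μ[f|ℱ n] := hκ f hf h0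
      _ ≤ _ := by
        rw [one_mul, mul_assoc]
        gcongr
        exact hbound ν hν f hf hsupp hvan

theorem stmt17
    (μ : Measure Ω) [IsProbabilityMeasure μ] (ℱ : Filtration ℕ m0)
    (hsup : (⨆ n, (ℱ n : MeasurableSpace Ω)) = m0)
    (Os : ℤ → Set Ω) (hOmeas : ∀ j, MeasurableSet (Os j)) (hOne : ∀ j, (Os j).Nonempty)
    (hOdisj : Pairwise fun i j => Disjoint (Os i) (Os j)) (hOcov : (⋃ j, Os j) = Set.univ)
    (p q : ℝ) (hp : 0 < p) (hpq : p ≤ q) (hq1 : q ≤ 1) :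
    ∃ C : ℝ, 0 < C ∧
      (∀ ν : Ω → ℕ∞, IsStoppingTimeE ℱ ν →
        ∀ f : Ω → ℝ, MemLp f 2 μ → (∀ᵐ ω ∂μ, ν ω = ⊤ → f ω = 0) →
          (∀ n : ℕ, ∀ᵐ ω ∂μ, (n : ℕ∞) ≤ ν ω → (μ[f|ℱ n]) ω = 0) →
          HsNorm ℱ μ Os p (ENNReal.ofReal q) (fun n => μ[f|ℱ n]) < ∞ ∧
          HsNorm ℱ μ Os p (ENNReal.ofReal q) (fun n => μ[f|ℱ n]) ≤
            ENNReal.ofReal C * μ (Bset ν) ^ (1 / p - 1 / 2) *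
              (∫⁻ ω in Bset ν, ENNReal.ofReal (f ω ^ 2) ∂μ) ^ (2⁻¹ : ℝ)) ∧
      ∀ κ : (Ω → ℝ) → ℝ, ∀ K : ℝ, 0 ≤ K →
        (∀ f : Ω → ℝ, MemLp f 2 μ → μ[f|ℱ 0] =ᵐ[μ] 0 →
          ENNReal.ofReal |κ f| ≤
            ENNReal.ofReal K *
              HsNorm ℱ μ Os p (ENNReal.ofReal q) fun n => μ[f|ℱ n]) →
        ∀ ν : Ω → ℕ∞, IsStoppingTimeE ℱ ν →
        ∀ f : Ω → ℝ, MemLp f 2 μ → (∀ᵐ ω ∂μ, ν ω = ⊤ → f ω = 0) →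
          (∀ n : ℕ, ∀ᵐ ω ∂μ, (n : ℕ∞) ≤ ν ω → (μ[f|ℱ n]) ω = 0) →
          ENNReal.ofReal |κ f| ≤
            ENNReal.ofReal (C * K) * μ (Bset ν) ^ (1 / p - 1 / 2) *
              (∫⁻ ω in Bset ν, ENNReal.ofReal (f ω ^ 2) ∂μ) ^ (2⁻¹ : ℝ) :=
  stmt17_general μ ℱ Os hOmeas hOdisj hOcov p q hp hpq hq1

end
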